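/- arXiv:1502.00766 — 3 statements merged into one kernel-verified Lean document; each statement's English description precedes it below -/
import Mathlib

section
/- Let R be a commutative ring and C a semidualizing R-module. If 0 → W' → W → W'' → 0 is a short exact sequence of R-modules with W' and W'' both C-projective, then W is C-projective. -/
open CategoryTheory CategoryTheory.Limits TensorProduct

noncomputable section

variable (R : Type) [CommRing R]

/-- The category of (cochain) complexes of `R`-modules. -/
abbrev Cx := CochainComplex (ModuleCat.{0} R) ℤ

/-- `M` is `C`-projective: `M ≅ C ⊗ P` for some projective `P`. -/
def IsCProj (C M : ModuleCat.{0} R) : Prop :=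
  ∃ P : ModuleCat.{0} R, Projective P ∧ Nonempty (M ≅ ModuleCat.of R (↥C ⊗[R] ↥P))

/-- `M` is `C`-flat: `M ≅ C ⊗ F` for some flat `F`. -/
def IsCFlat (C M : ModuleCat.{0} R) : Prop :=
  ∃ F : ModuleCat.{0} R, Module.Flat R ↥F ∧ Nonempty (M ≅ ModuleCat.of R (↥C ⊗[R] ↥F))

/-- Semidualizing module. -/
structure IsSemidualizing (C : ModuleCat.{0} R) : Prop where
  resolution : ∃ (P : ChainComplex (ModuleCat.{0} R) ℕ)
      (π : P ⟶ (ChainComplex.single₀ (ModuleCat.{0} R)).obj C),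
      (∀ n, Projective (P.X n)) ∧ (∀ n, Module.Finite R ↥(P.X n)) ∧ QuasiIso π
  homothety : Function.Bijective (fun r : R => r • (LinearMap.id : ↥C →ₗ[R] ↥C))
  ext_vanish : ∀ n : ℕ, 0 < n →
    Subsingleton (((Ext R (ModuleCat.{0} R) n).obj (Opposite.op C)).obj C)

/-- Exactness of `Hom(E, W)` at every spot, for `E` a complex of modules. -/
def HomSeqExact (E : Cx R) (W : ModuleCat.{0} R) : Prop :=
  ∀ n : ℤ, Function.Exact (fun g : E.X (n + 1) ⟶ W => E.d n (n + 1) ≫ g)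
    (fun h : E.X n ⟶ W => E.d (n - 1) n ≫ h)

/-- `M` is a `D_C`-projective module. -/
def IsDCProj (C M : ModuleCat.{0} R) : Prop :=
  ∃ E : Cx R, (∀ n, E.ExactAt n) ∧ (∀ n : ℤ, n ≤ 0 → Projective (E.X n)) ∧
    (∀ n : ℤ, 0 < n → IsCProj R C (E.X n)) ∧
    (∀ W : ModuleCat.{0} R, IsCFlat R C W → HomSeqExact R E W) ∧
    Nonempty (M ≅ Limits.image (E.d 0 1))

/-- `X` is an exact complex whose cycles all satisfy `P`. -/
def IsClassCx (P : ModuleCat.{0} R → Prop) (X : Cx R) : Prop :=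
  (∀ i, X.ExactAt i) ∧ ∀ i, P (X.cycles i)

/-- Projective complex. -/
def IsProjCx (X : Cx R) : Prop := IsClassCx R (fun M => Projective M) X

/-- `C`-projective complex. -/
def IsCProjCx (C : ModuleCat.{0} R) (X : Cx R) : Prop := IsClassCx R (IsCProj R C) X

/-- `C`-flat complex. -/
def IsCFlatCx (C : ModuleCat.{0} R) (X : Cx R) : Prop := IsClassCx R (IsCFlat R C) X

/-- Exactness of `Hom(E, H)` for a sequence of complexes `E`. -/
def HomCxSeqExact (E : CochainComplex (Cx R) ℤ) (H : Cx R) : Prop :=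
  ∀ n : ℤ, Function.Exact (fun g : E.X (n + 1) ⟶ H => E.d n (n + 1) ≫ g)
    (fun h : E.X n ⟶ H => E.d (n - 1) n ≫ h)

/-- `X` is a `D_C`-projective complex. -/
def IsDCProjCx (C : ModuleCat.{0} R) (X : Cx R) : Prop :=
  ∃ E : CochainComplex (Cx R) ℤ, (∀ n, E.ExactAt n) ∧
    (∀ n : ℤ, n ≤ 0 → IsProjCx R (E.X n)) ∧
    (∀ n : ℤ, 0 < n → IsCProjCx R C (E.X n)) ∧
    (∀ H : Cx R, IsCFlatCx R C H → HomCxSeqExact R E H) ∧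
    Nonempty (X ≅ Limits.image (E.d 0 1))

/-- The total Hom-complex `𝓗om(X, H)` is exact. -/
def HomComplexExact (X H : Cx R) : Prop :=
  ∀ n : ℤ, (CochainComplex.HomComplex X H).ExactAt n

/-- `Ext^m(X, H) = 0` in the category of complexes. -/
def ExtCxZero (X H : Cx R) (m : ℕ) : Prop :=
  letI : HasDerivedCategory (Cx R) := HasDerivedCategory.standard _
  letI : HasExt (Cx R) := hasExt_of_hasDerivedCategory _
  Subsingleton (Abelian.Ext X H m)


/-- Exactness of `0 → Hom(X,H) → Hom(G0,H) → Hom(G1,H) → Hom(A,H) → 0`, i.e. the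
four-term exact sequence `0 → A → G1 → G0 → X → 0` of complexes stays exact under
`Hom(-, H)`. -/
def HomFourExact {A G1 G0 X : Cx R} (a : A ⟶ G1) (b : G1 ⟶ G0) (c : G0 ⟶ X)
    (H : Cx R) : Prop :=
  Function.Injective (fun g : X ⟶ H => c ≫ g) ∧
  Function.Exact (fun g : X ⟶ H => c ≫ g) (fun g : G0 ⟶ H => b ≫ g) ∧
  Function.Exact (fun g : G0 ⟶ H => b ≫ g) (fun g : G1 ⟶ H => a ≫ g) ∧
  Function.Surjective (fun g : G1 ⟶ H => a ≫ g)

/-- `D_C`-projective dimension of the complex `X` is at most `n`: there is an exact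
sequence `0 → G_n → ⋯ → G_0 → X → 0` (here `G_{n-i}` sits in position `i` and `X` in
position `n+1`) with all `G_i` `D_C`-projective complexes. -/
def DCpdLE (C : ModuleCat.{0} R) (X : Cx R) (n : ℕ) : Prop :=
  ∃ E : CochainComplex (Cx R) ℤ, (∀ i, E.ExactAt i) ∧
    (∀ i : ℤ, i < 0 → IsZero (E.X i)) ∧ (∀ i : ℤ, (n : ℤ) + 1 < i → IsZero (E.X i)) ∧
    (∀ i : ℤ, 0 ≤ i → i ≤ (n : ℤ) → IsDCProjCx R C (E.X i)) ∧
    Nonempty (E.X ((n : ℤ) + 1) ≅ X)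

/-- `C`-projective dimension (`𝒫_C`-pd) of the complex `X` is at most `n`. -/
def CpdLE (C : ModuleCat.{0} R) (X : Cx R) (n : ℕ) : Prop :=
  ∃ E : CochainComplex (Cx R) ℤ, (∀ i, E.ExactAt i) ∧
    (∀ i : ℤ, i < 0 → IsZero (E.X i)) ∧ (∀ i : ℤ, (n : ℤ) + 1 < i → IsZero (E.X i)) ∧
    (∀ i : ℤ, 0 ≤ i → i ≤ (n : ℤ) → IsCProjCx R C (E.X i)) ∧
    Nonempty (E.X ((n : ℤ) + 1) ≅ X)

/-!
The sequence splits. Compute `Ext¹(C, -)` on a projective resolution `P₂ → P₁ → P₀ → C` with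
`P₁` finitely generated. A cocycle `P₁ → ⨁ C` lands in finitely many summands, so
`Ext¹(C, C) = 0` gives `Ext¹(C, ⨁ C) = 0`, and then `Ext¹(C, C ⊗ P) = 0` for projective `P`,
since `C ⊗ P` is a retract of a direct sum of copies of `C`. Hence `Hom(C, W) → Hom(C, W'')` is
onto, and as `W''` is itself a retract of a direct sum of copies of `C`, `g` has a section. So
`W ≅ W' × W'' ≅ C ⊗ (P' × P'')`.
-/

section

variable {R}

section CocyclesExtend

variable {P₂ P₁ P₀ : Type*} [AddCommGroup P₂] [Module R P₂] [AddCommGroup P₁] [Module R P₁]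
  [AddCommGroup P₀] [Module R P₀]

/-- For a projective resolution `⋯ → P₂ → P₁ → P₀` of `C`, this says `Ext¹(C, M) = 0`. -/
def CocyclesExtend (d₂ : P₂ →ₗ[R] P₁) (d₁ : P₁ →ₗ[R] P₀) (M : Type*) [AddCommGroup M]
    [Module R M] : Prop :=
  ∀ α : P₁ →ₗ[R] M, α ∘ₗ d₂ = 0 → ∃ β : P₀ →ₗ[R] M, β ∘ₗ d₁ = α

variable {d₂ : P₂ →ₗ[R] P₁} {d₁ : P₁ →ₗ[R] P₀}
  {M N : Type*} [AddCommGroup M] [Module R M] [AddCommGroup N] [Module R N]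

theorem CocyclesExtend.of_retract (hN : CocyclesExtend d₂ d₁ N) (i : M →ₗ[R] N)
    (r : N →ₗ[R] M) (hri : r ∘ₗ i = LinearMap.id) : CocyclesExtend d₂ d₁ M := by
  intro α hα
  obtain ⟨β, hβ⟩ := hN (i ∘ₗ α) (by rw [LinearMap.comp_assoc, hα, LinearMap.comp_zero])
  refine ⟨r ∘ₗ β, ?_⟩
  rw [LinearMap.comp_assoc, hβ, ← LinearMap.comp_assoc, hri, LinearMap.id_comp]

theorem CocyclesExtend.of_linearEquiv (hN : CocyclesExtend d₂ d₁ N) (e : M ≃ₗ[R] N) :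
    CocyclesExtend d₂ d₁ M :=
  hN.of_retract e.toLinearMap e.symm.toLinearMap e.symm_comp

theorem CocyclesExtend.pi {ι : Type*} {M : ι → Type*} [∀ j, AddCommGroup (M j)]
    [∀ j, Module R (M j)] (h : ∀ j, CocyclesExtend d₂ d₁ (M j)) :
    CocyclesExtend d₂ d₁ (∀ j, M j) := by
  intro α hα
  choose β hβ using fun j ↦
    h j (LinearMap.proj j ∘ₗ α) (by rw [LinearMap.comp_assoc, hα, LinearMap.comp_zero])
  refine ⟨LinearMap.pi β, ?_⟩
  ext x j
  exact LinearMap.congr_fun (hβ j) x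

theorem LinearMap.exists_finset_range_le_supported [Module.Finite R P₁] {ι : Type*}
    (α : P₁ →ₗ[R] ι →₀ M) : ∃ s : Finset ι, range α ≤ Finsupp.supported M R (s : Set ι) := by
  classical
  obtain ⟨T, hT⟩ := (Module.Finite.fg_top (R := R) (M := P₁)).map α
  refine ⟨T.sup Finsupp.support, ?_⟩
  rw [range_eq_map, ← hT, Submodule.span_le]
  intro t ht
  exact (Finsupp.mem_supported R t).mpr (Finset.coe_subset.mpr (Finset.le_sup ht))

theorem CocyclesExtend.finsupp [Module.Finite R P₁] {ι : Type*}
    (hM : CocyclesExtend d₂ d₁ M) : CocyclesExtend d₂ d₁ (ι →₀ M) := by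
  intro α hα
  obtain ⟨s, hs⟩ := α.exists_finset_range_le_supported
  let V := Finsupp.supported M R (s : Set ι)
  have hV : CocyclesExtend d₂ d₁ V := (CocyclesExtend.pi fun _ ↦ hM).of_linearEquiv
    ((Finsupp.supportedEquivFinsupp (s : Set ι)).trans (Finsupp.linearEquivFunOnFinite R M s))
  obtain ⟨β, hβ⟩ := hV (α.codRestrict V fun x ↦ hs ⟨x, rfl⟩)
    (LinearMap.ext fun x ↦ Subtype.ext (LinearMap.congr_fun hα x))
  exact ⟨V.subtype ∘ₗ β, by rw [LinearMap.comp_assoc, hβ, LinearMap.subtype_comp_codRestrict]⟩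

theorem exists_retraction_tensor_finsupp (C Q : Type*) [AddCommGroup C] [Module R C]
    [AddCommGroup Q] [Module R Q] [Module.Projective R Q] :
    ∃ (i : C ⊗[R] Q →ₗ[R] Q →₀ C) (r : (Q →₀ C) →ₗ[R] C ⊗[R] Q), r ∘ₗ i = LinearMap.id := by
  classical
  obtain ⟨s, hs⟩ := Module.projective_def'.mp ‹Module.Projective R Q›
  let e := TensorProduct.finsuppScalarRight R R C Q
  refine ⟨e.toLinearMap ∘ₗ s.lTensor C,
    (Finsupp.linearCombination R id).lTensor C ∘ₗ e.symm.toLinearMap, ?_⟩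
  rw [LinearMap.comp_assoc, ← LinearMap.comp_assoc _ e.toLinearMap, e.symm_comp,
    LinearMap.id_comp, ← LinearMap.lTensor_comp, hs, LinearMap.lTensor_id]

theorem CocyclesExtend.tensor_projective [Module.Finite R P₁] {C Q : Type*} [AddCommGroup C]
    [Module R C] [AddCommGroup Q] [Module R Q] [Module.Projective R Q]
    (hC : CocyclesExtend d₂ d₁ C) : CocyclesExtend d₂ d₁ (C ⊗[R] Q) := by
  obtain ⟨i, r, hri⟩ := exists_retraction_tensor_finsupp (R := R) C Q
  exact hC.finsupp.of_retract i r hri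

end CocyclesExtend

section Lifting

variable {P₂ P₁ P₀ C W' W W'' : Type*} [AddCommGroup P₂] [Module R P₂] [AddCommGroup P₁]
  [Module R P₁] [AddCommGroup P₀] [Module R P₀] [AddCommGroup C] [Module R C]
  [AddCommGroup W'] [Module R W'] [AddCommGroup W] [Module R W] [AddCommGroup W''] [Module R W'']

theorem exists_lift_of_cocyclesExtend {d₂ : P₂ →ₗ[R] P₁} {d₁ : P₁ →ₗ[R] P₀}
    [Module.Projective R P₀] (hd : d₁ ∘ₗ d₂ = 0) {ε : P₀ →ₗ[R] C} (hε : Function.Surjective ε)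
    (hd₁ε : Function.Exact d₁ ε) {f : W' →ₗ[R] W} {g : W →ₗ[R] W''}
    (hf : Function.Injective f) (hfg : Function.Exact f g) (hg : Function.Surjective g)
    (hW' : CocyclesExtend d₂ d₁ W') (φ : C →ₗ[R] W'') : ∃ ψ : C →ₗ[R] W, g ∘ₗ ψ = φ := by
  have hker : CocyclesExtend d₂ d₁ (LinearMap.ker g) := hW'.of_linearEquiv
    ((LinearEquiv.ofEq _ _ hfg.linearMap_ker_eq).trans (LinearEquiv.ofInjective f hf).symm)
  obtain ⟨ψ₀, hψ₀⟩ := Module.projective_lifting_property g (φ ∘ₗ ε) hg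
  have hψ₀d₁ : ∀ x, ψ₀ (d₁ x) ∈ LinearMap.ker g := fun x ↦ by
    rw [LinearMap.mem_ker, ← LinearMap.comp_apply, hψ₀, LinearMap.comp_apply,
      hd₁ε.apply_apply_eq_zero, map_zero]
  -- correct `ψ₀` by a map into `ker g` so that it vanishes on `range d₁ = ker ε`
  obtain ⟨β, hβ⟩ := hker ((ψ₀ ∘ₗ d₁).codRestrict _ hψ₀d₁) <| LinearMap.ext fun x ↦
    Subtype.ext (by simp [← LinearMap.comp_apply d₁ d₂, hd])
  let ψ₁ := ψ₀ - (LinearMap.ker g).subtype ∘ₗ β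
  have hψ₁ : LinearMap.range d₁ ≤ LinearMap.ker ψ₁ := by
    rintro _ ⟨x, rfl⟩
    simp [ψ₁, ← LinearMap.comp_apply β d₁, hβ]
  refine ⟨(LinearMap.range d₁).liftQ ψ₁ hψ₁ ∘ₗ
    (hd₁ε.linearEquivOfSurjective hε).symm.toLinearMap, LinearMap.ext fun c ↦ ?_⟩
  obtain ⟨x, rfl⟩ := hε c
  simp [ψ₁, ← LinearMap.comp_apply g ψ₀, hψ₀]

theorem exists_section_of_lift_of_retraction {J : Type*} {g : W →ₗ[R] W''}
    (hlift : ∀ φ : C →ₗ[R] W'', ∃ ψ : C →ₗ[R] W, g ∘ₗ ψ = φ)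
    (i : W'' →ₗ[R] J →₀ C) (r : (J →₀ C) →ₗ[R] W'') (hri : r ∘ₗ i = LinearMap.id) :
    ∃ s : W'' →ₗ[R] W, g ∘ₗ s = LinearMap.id := by
  choose t ht using fun j ↦ hlift (r ∘ₗ Finsupp.lsingle j)
  have hgt : g ∘ₗ Finsupp.lsum R t = r :=
    Finsupp.lhom_ext' fun j ↦ by rw [LinearMap.comp_assoc, Finsupp.lsum_comp_lsingle, ht]
  exact ⟨Finsupp.lsum R t ∘ₗ i, by rw [← LinearMap.comp_assoc, hgt, hri]⟩

end Lifting

namespace CategoryTheory.ProjectiveResolution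

variable {C : ModuleCat.{0} R} (PR : ProjectiveResolution C)

theorem cocyclesExtend_of_subsingleton_ext (M : ModuleCat.{0} R)
    (hM : Subsingleton (((Ext R (ModuleCat.{0} R) 1).obj (Opposite.op C)).obj M)) :
    CocyclesExtend (PR.complex.d 2 1).hom (PR.complex.d 1 0).hom M := by
  have : Subsingleton ((PR.complex.linearYonedaObj R M).homology 1) :=
    (PR.isoExt 1 M).toLinearEquiv.symm.toEquiv.subsingleton
  have hexact := (HomologicalComplex.exactAt_iff' (PR.complex.linearYonedaObj R M) 0 1 2
    (by simp) (by simp)).mp ((HomologicalComplex.exactAt_iff_isZero_homology _ 1).mpr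
      (ModuleCat.isZero_of_subsingleton _))
  intro α hα
  obtain ⟨β, hβ⟩ := (ShortComplex.moduleCat_exact_iff _).mp hexact (ModuleCat.ofHom α)
    (ModuleCat.hom_ext hα)
  exact ⟨β.hom, congrArg ModuleCat.Hom.hom hβ⟩

theorem exists_lift_of_cocyclesExtend {W' W W'' : Type*} [AddCommGroup W'] [Module R W']
    [AddCommGroup W] [Module R W] [AddCommGroup W''] [Module R W''] {f : W' →ₗ[R] W}
    {g : W →ₗ[R] W''} (hf : Function.Injective f) (hfg : Function.Exact f g)
    (hg : Function.Surjective g)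
    (hW' : CocyclesExtend (PR.complex.d 2 1).hom (PR.complex.d 1 0).hom W')
    (φ : C →ₗ[R] W'') : ∃ ψ : C →ₗ[R] W, g ∘ₗ ψ = φ :=
  _root_.exists_lift_of_cocyclesExtend
    (by rw [← ModuleCat.hom_comp, PR.complex.d_comp_d, ModuleCat.hom_zero])
    ((ModuleCat.epi_iff_surjective _).mp inferInstance)
    ((ShortComplex.ShortExact.moduleCat_exact_iff_function_exact _).mp PR.exact₀)
    hf hfg hg hW' φ

end CategoryTheory.ProjectiveResolution

end

/-- If `0 → W' → W → W'' → 0` is a short exact sequence of `R`-modules with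
`W'` and `W''` both `C`-projective, then `W` is `C`-projective. -/
theorem cProj_of_shortExact (C : ModuleCat.{0} R) (hC : IsSemidualizing R C)
    (W' W W'' : ModuleCat.{0} R) (f : W' ⟶ W) (g : W ⟶ W'') (w : f ≫ g = 0)
    (hse : (ShortComplex.mk f g w).ShortExact)
    (h' : IsCProj R C W') (h'' : IsCProj R C W'') : IsCProj R C W := by
  obtain ⟨P', hP', ⟨e'⟩⟩ := h'
  obtain ⟨P'', hP'', ⟨e''⟩⟩ := h''
  obtain ⟨Pc, π, hproj, hfin, hqis⟩ := hC.resolution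
  let PR : ProjectiveResolution C :=
    { complex := Pc, projective := hproj, π := π, quasiIso := hqis }
  have : Module.Finite R (Pc.X 1) := hfin 1
  have hf : Function.Injective f := hse.moduleCat_injective_f
  have hfg : Function.Exact f g :=
    (ShortComplex.ShortExact.moduleCat_exact_iff_function_exact _).mp hse.exact
  have hW' : CocyclesExtend (PR.complex.d 2 1).hom (PR.complex.d 1 0).hom W' :=
    (PR.cocyclesExtend_of_subsingleton_ext C (hC.ext_vanish 1 one_pos)).tensor_projective
      |>.of_linearEquiv e'.toLinearEquiv
  obtain ⟨i, r, hri⟩ := exists_retraction_tensor_finsupp (R := R) C P''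
  obtain ⟨s, hs⟩ := exists_section_of_lift_of_retraction
    (PR.exists_lift_of_cocyclesExtend hf hfg hse.moduleCat_surjective_g hW')
    (i ∘ₗ e''.toLinearEquiv.toLinearMap) (e''.toLinearEquiv.symm.toLinearMap ∘ₗ r)
    (by rw [LinearMap.comp_assoc, ← LinearMap.comp_assoc _ i r, hri, LinearMap.id_comp,
      LinearEquiv.symm_comp])
  refine ⟨ModuleCat.of R (P' × P''), inferInstance, ⟨LinearEquiv.toModuleIso ?_⟩⟩
  exact (hfg.splitSurjectiveEquiv hf ⟨s, hs⟩).1 ≪≫ₗ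
    e'.toLinearEquiv.prodCongr e''.toLinearEquiv ≪≫ₗ (TensorProduct.prodRight R R C P' P'').symm
end
end

section
/- Let R be a commutative ring and C a semidualizing R-module. If 0 → W' → W → W'' → 0 is a short exact sequence of R-modules with W' and W'' both C-flat, then W is C-flat. -/
/-!
Write `H(V) = Hom(C, V)`. For a `C`-flat module `V ≅ C ⊗ F`, since `C` is finitely presented and
`F` is flat, `H(V) ≅ Hom(C, C) ⊗ F ≅ F` is flat, the evaluation map `C ⊗ H(V) → V` is an
isomorphism, and `Ext¹(C, V) ≅ Ext¹(C, C) ⊗ F = 0` (computed on a resolution of `C` by finite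
projectives). The last fact makes `0 → H(W') → H(W) → H(W'') → 0` exact, so `H(W)` is an extension
of flat modules, hence flat; and the five lemma applied to the evaluation maps gives `W ≅ C ⊗ H(W)`.
-/

open CategoryTheory CategoryTheory.Limits TensorProduct

noncomputable section

variable (R : Type) [CommRing R]

open LinearMap Function

section LinearAlgebra

variable {R : Type*} [CommRing R] {M N P Q M₁ M₂ M₃ : Type*} [AddCommGroup M] [AddCommGroup N]
  [AddCommGroup P] [AddCommGroup Q] [AddCommGroup M₁] [AddCommGroup M₂] [AddCommGroup M₃]
  [Module R M] [Module R N] [Module R P] [Module R Q] [Module R M₁] [Module R M₂] [Module R M₃]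

theorem LinearMap.exact_compRight_of_exact_of_injective (X : Type*) [AddCommGroup X] [Module R X]
    {f : M₁ →ₗ[R] M₂} {g : M₂ →ₗ[R] M₃} (hfg : Exact f g) (hf : Injective f) :
    Exact (compRight R f : (X →ₗ[R] M₁) →ₗ[R] _) (compRight R g) := by
  intro φ
  refine ⟨fun h => ?_, ?_⟩
  · have hφ (x : X) : φ x ∈ range f := hfg.linearMap_ker_eq ▸ congr($h x)
    exact ⟨(LinearEquiv.ofInjective f hf).symm ∘ₗ φ.codRestrict _ hφ, by ext x; simp⟩
  · rintro ⟨ψ, rfl⟩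
    ext x
    exact hfg.apply_apply_eq_zero (ψ x)

theorem Module.Flat.of_exact [Module.Flat R M₁] [Module.Flat R M₃] {f : M₁ →ₗ[R] M₂}
    {g : M₂ →ₗ[R] M₃} (hfg : Exact f g) (hf : Function.Injective f) (hg : Surjective g) :
    Module.Flat R M₂ := by
  rw [Module.Flat.iff_rTensor_injective']
  intro I
  -- four lemma on `I ⊗ M₁ → I ⊗ M₂ → I ⊗ M₃` over `R ⊗ M₁ → R ⊗ M₂ → R ⊗ M₃`; the top row is
  -- left exact because `M₃` is flat
  exact injective_of_surjective_of_injective_of_injective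
    (0 : PUnit →ₗ[R] I ⊗[R] M₁) (lTensor I f) (lTensor I g) (0 : PUnit →ₗ[R] R ⊗[R] M₁)
    (lTensor R f) (lTensor R g) 0 _ _ _ (by simp)
    (by rw [rTensor_comp_lTensor, lTensor_comp_rTensor])
    (by rw [rTensor_comp_lTensor, lTensor_comp_rTensor])
    ((exact_zero_iff_injective _ _).mpr (lTensor_injective_of_exact_of_flat g hg f hf hfg I))
    (_root_.lTensor_exact I hfg hg)
    ((exact_zero_iff_injective _ _).mpr (Module.Flat.lTensor_preserves_injective_linearMap f hf))
    (fun _ => ⟨0, rfl⟩)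
    (Module.Flat.rTensor_preserves_injective_linearMap _ I.injective_subtype)
    (Module.Flat.rTensor_preserves_injective_linearMap _ I.injective_subtype)

theorem lcomp_comp_rTensorHomToHomRTensor (u : M →ₗ[R] N) :
    lcomp R (P ⊗[R] Q) u ∘ₗ rTensorHomToHomRTensor (.id R) N P Q =
      rTensorHomToHomRTensor (.id R) M P Q ∘ₗ rTensor Q (lcomp R P u) :=
  TensorProduct.ext' fun _ _ => rfl

variable (R M P Q) in
theorem Module.FinitePresentation.bijective_rTensorHomToHomRTensor
    [Module.FinitePresentation R M] [Module.Flat R Q] :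
    Bijective (rTensorHomToHomRTensor (.id R) M P Q) := by
  have bijective_of_free (n : ℕ) :
      Bijective (rTensorHomToHomRTensor (.id R) (Fin n → R) P Q) := by
    rw [← rTensorHomEquivHomRTensor_toLinearMap]
    exact LinearEquiv.bijective _
  obtain ⟨n, m, f, g, hf, hgf⟩ := Module.FinitePresentation.exists_fin' R M
  exact bijective_of_bijective_of_injective_of_left_exact _ _ _ _ _ _ _
    (lcomp_comp_rTensorHomToHomRTensor f) (lcomp_comp_rTensorHomToHomRTensor g)
    (Module.Flat.rTensor_exact Q (exact_lcomp_of_exact_of_surjective P hgf hf))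
    (exact_lcomp_of_exact_of_surjective _ hgf hf) (bijective_of_free n) (bijective_of_free m).1
    (Module.Flat.rTensor_preserves_injective_linearMap _ (lcomp_injective_of_surjective f hf))
    (lcomp_injective_of_surjective f hf)

theorem exact_lcomp_tensor_of_exact_lcomp {Q₀ Q₁ Q₂ : Type*} [AddCommGroup Q₀] [AddCommGroup Q₁]
    [AddCommGroup Q₂] [Module R Q₀] [Module R Q₁] [Module R Q₂] [Module.FinitePresentation R Q₀]
    [Module.FinitePresentation R Q₁] [Module.FinitePresentation R Q₂] [Module.Flat R Q]
    {d₁ : Q₁ →ₗ[R] Q₀} {d₂ : Q₂ →ₗ[R] Q₁} (h : Exact (lcomp R P d₁) (lcomp R P d₂)) :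
    Exact (lcomp R (P ⊗[R] Q) d₁) (lcomp R (P ⊗[R] Q) d₂) :=
  (Exact.iff_of_ladder_linearEquiv
    (e₁ := .ofBijective _ (Module.FinitePresentation.bijective_rTensorHomToHomRTensor R Q₀ P Q))
    (e₂ := .ofBijective _ (Module.FinitePresentation.bijective_rTensorHomToHomRTensor R Q₁ P Q))
    (e₃ := .ofBijective _ (Module.FinitePresentation.bijective_rTensorHomToHomRTensor R Q₂ P Q))
    (lcomp_comp_rTensorHomToHomRTensor d₁) (lcomp_comp_rTensorHomToHomRTensor d₂)).mpr
    (Module.Flat.rTensor_exact Q h)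

theorem bijective_mk_flip_of_bijective_homothety [Module.FinitePresentation R M] [Module.Flat R Q]
    (hM : Bijective (toSpanSingleton R (M →ₗ[R] M) LinearMap.id)) :
    Bijective (TensorProduct.mk R M Q).flip := by
  let σ := LinearEquiv.ofBijective (toSpanSingleton R (M →ₗ[R] M) LinearMap.id) hM
  have : (TensorProduct.mk R M Q).flip = rTensorHomToHomRTensor (.id R) M M Q ∘ₗ
      ((TensorProduct.lid R Q).symm ≪≫ₗ LinearEquiv.rTensor Q σ).toLinearMap := by
    ext x m
    simp [σ]
  rw [this, coe_comp]
  exact (Module.FinitePresentation.bijective_rTensorHomToHomRTensor R M M Q).comp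
    (LinearEquiv.bijective _)

theorem bijective_lift_applyₗ_tensor_of_bijective_homothety [Module.FinitePresentation R M]
    [Module.Flat R Q] (hM : Bijective (toSpanSingleton R (M →ₗ[R] M) LinearMap.id)) :
    Bijective (TensorProduct.lift (applyₗ : M →ₗ[R] (M →ₗ[R] M ⊗[R] Q) →ₗ[R] M ⊗[R] Q)) := by
  set e := LinearEquiv.lTensor M
    (.ofBijective _ (bijective_mk_flip_of_bijective_homothety (Q := Q) hM))
  have h (z : M ⊗[R] Q) : TensorProduct.lift applyₗ (e z) = z := by
    induction z using TensorProduct.induction_on <;> simp_all [e]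
  have : ⇑(TensorProduct.lift applyₗ) = e.symm := funext fun z => by simpa using h (e.symm z)
  rw [this]
  exact e.symm.bijective

theorem surjective_compRight_of_exact_lcomp {C Q₀ Q₁ Q₂ W W'' : Type*} [AddCommGroup C]
    [AddCommGroup Q₀] [AddCommGroup Q₁] [AddCommGroup Q₂] [AddCommGroup W] [AddCommGroup W'']
    [Module R C] [Module R Q₀] [Module R Q₁] [Module R Q₂] [Module R W] [Module R W'']
    [Module.Projective R Q₀] {d₁ : Q₁ →ₗ[R] Q₀} {d₂ : Q₂ →ₗ[R] Q₁} {ε : Q₀ →ₗ[R] C}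
    (hε : Surjective ε) (hd₁ε : Exact d₁ ε) (hd : d₁ ∘ₗ d₂ = 0)
    (hExt : Exact (lcomp R N d₁) (lcomp R N d₂)) {f : N →ₗ[R] W} {g : W →ₗ[R] W''}
    (hfg : Exact f g) (hf : Injective f) (hg : Surjective g) :
    Surjective (compRight R g : (C →ₗ[R] W) →ₗ[R] _) := by
  -- `hExt` says `Ext¹(C, N) = 0`. A lift `u` of `φ ∘ ε` is corrected by `f ∘ k`, where `k`
  -- extends `f⁻¹ ∘ u ∘ d₁` along `d₁`, so that it vanishes on `ker ε` and descends to `C`.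
  intro φ
  obtain ⟨u, hu⟩ := Module.projective_lifting_property g (φ ∘ₗ ε) hg
  obtain ⟨s, hs⟩ := (exact_compRight_of_exact_of_injective Q₁ hfg hf (u ∘ₗ d₁)).mp (by
    rw [compRight_apply, ← LinearMap.comp_assoc, hu, LinearMap.comp_assoc,
      hd₁ε.linearMap_comp_eq_zero, LinearMap.comp_zero])
  rw [compRight_apply] at hs
  obtain ⟨k, hk⟩ := (hExt s).mp <| hf.injective_linearMapComp_left <| by
    change f ∘ₗ s ∘ₗ d₂ = f ∘ₗ 0
    rw [← LinearMap.comp_assoc, hs, LinearMap.comp_assoc, hd, LinearMap.comp_zero,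
      LinearMap.comp_zero]
  rw [lcomp_apply'] at hk
  obtain ⟨ψ, hψ⟩ := (exact_lcomp_of_exact_of_surjective W hd₁ε hε (u - f ∘ₗ k)).mp <| by
    rw [lcomp_apply', sub_comp, LinearMap.comp_assoc, hk, hs, sub_self]
  rw [lcomp_apply'] at hψ
  refine ⟨ψ, hε.injective_linearMapComp_right ?_⟩
  change g ∘ₗ ψ ∘ₗ ε = φ ∘ₗ ε
  rw [hψ, comp_sub, hu, ← LinearMap.comp_assoc, hfg.linearMap_comp_eq_zero, LinearMap.zero_comp,
    sub_zero]

theorem bijective_lift_applyₗ_of_exact [Module.Flat R (M →ₗ[R] M₃)] {f : M₁ →ₗ[R] M₂}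
    {g : M₂ →ₗ[R] M₃} (hfg : Exact f g) (hf : Injective f) (hg : Surjective g)
    (hgM : Surjective (compRight R g : (M →ₗ[R] M₂) →ₗ[R] _))
    (h₁ : Bijective (TensorProduct.lift (applyₗ : M →ₗ[R] (M →ₗ[R] M₁) →ₗ[R] M₁)))
    (h₃ : Bijective (TensorProduct.lift (applyₗ : M →ₗ[R] (M →ₗ[R] M₃) →ₗ[R] M₃))) :
    Bijective (TensorProduct.lift (applyₗ : M →ₗ[R] (M →ₗ[R] M₂) →ₗ[R] M₂)) := by
  have hHom := exact_compRight_of_exact_of_injective M hfg hf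
  exact bijective_of_surjective_of_bijective_of_bijective_of_injective
    (0 : PUnit →ₗ[R] _) (lTensor M (compRight R f)) (lTensor M (compRight R g)) (0 : _ →ₗ[R] PUnit)
    (0 : PUnit →ₗ[R] _) f g (0 : _ →ₗ[R] PUnit) 0 _ _ _ 0 (by simp)
    (TensorProduct.ext' fun _ _ => rfl) (TensorProduct.ext' fun _ _ => rfl) (by simp)
    ((exact_zero_iff_injective _ _).mpr
      (lTensor_injective_of_exact_of_flat _ hgM _ hf.injective_linearMapComp_left hHom M))
    (_root_.lTensor_exact M hHom hgM)
    ((exact_zero_iff_surjective _ _).mpr (LinearMap.lTensor_surjective M hgM))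
    ((exact_zero_iff_injective _ _).mpr hf) hfg ((exact_zero_iff_surjective _ _).mpr hg)
    (fun _ => ⟨0, rfl⟩) h₁ h₃ (fun _ _ _ => rfl)

end LinearAlgebra

namespace CategoryTheory.ProjectiveResolution

variable {R : Type} [CommRing R] {X : ModuleCat.{0} R} (P : ProjectiveResolution X)

theorem surjective_π_f_zero : Surjective ((P.π.f 0).hom : P.complex.X 0 →ₗ[R] X) :=
  (ModuleCat.epi_iff_surjective _).mp inferInstance

theorem exact_d_one_zero_π_f_zero :
    Exact (P.complex.d 1 0) ((P.π.f 0).hom : P.complex.X 0 →ₗ[R] X) :=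
  (ShortComplex.ShortExact.moduleCat_exact_iff_function_exact _).mp P.exact₀

theorem exact_lcomp_of_subsingleton_ext (N : ModuleCat.{0} R)
    [Subsingleton (((Ext R (ModuleCat.{0} R) 1).obj (Opposite.op X)).obj N)] :
    Exact (lcomp R N (P.complex.d 1 0).hom) (lcomp R N (P.complex.d 2 1).hom) := by
  have : Subsingleton ((P.complex.linearYonedaObj R N).homology 1) :=
    (P.isoExt 1 N).symm.toLinearEquiv.toEquiv.subsingleton
  have hexact : ((P.complex.linearYonedaObj R N).sc' 0 1 2).Exact :=
    (HomologicalComplex.exactAt_iff' _ 0 1 2 (by simp) (by simp)).mp <|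
      (HomologicalComplex.exactAt_iff_isZero_homology _ 1).mpr (ModuleCat.isZero_of_subsingleton _)
  rw [ShortComplex.moduleCat_exact_iff] at hexact
  refine fun s => ⟨fun hs => ?_, ?_⟩
  · obtain ⟨k, hk⟩ := hexact (ModuleCat.ofHom s) (ModuleCat.hom_ext (by ext x; exact congr($hs x)))
    exact ⟨k.hom, congr(($hk).hom)⟩
  · rintro ⟨k, rfl⟩
    rw [lcomp_apply', lcomp_apply', LinearMap.comp_assoc, ← ModuleCat.hom_comp,
      HomologicalComplex.d_comp_d, ModuleCat.hom_zero, LinearMap.comp_zero]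

end CategoryTheory.ProjectiveResolution

namespace IsSemidualizing

variable {R : Type} [CommRing R] {C : ModuleCat.{0} R}

theorem exists_projectiveResolution (hC : IsSemidualizing R C) :
    ∃ P : ProjectiveResolution C, ∀ n, Module.FinitePresentation R (P.complex.X n) := by
  obtain ⟨P, π, hproj, hfin, hqis⟩ := hC.resolution
  refine ⟨{ complex := P, π := π, projective := hproj, quasiIso := hqis }, fun n => ?_⟩
  have := (IsProjective.iff_projective _).mpr (hproj n)
  exact Module.finitePresentation_of_projective R _

theorem finitePresentation (hC : IsSemidualizing R C) : Module.FinitePresentation R C := by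
  obtain ⟨P, _⟩ := hC.exists_projectiveResolution
  exact Module.finitePresentation_of_surjective _ P.surjective_π_f_zero
    (LinearMap.exact_iff.mp P.exact_d_one_zero_π_f_zero ▸ Submodule.fg_range _)

theorem surjective_compRight (hC : IsSemidualizing R C) {W' : ModuleCat.{0} R}
    {W W'' : Type*} [AddCommGroup W] [AddCommGroup W''] [Module R W] [Module R W'']
    {f : W' →ₗ[R] W} {g : W →ₗ[R] W''} (hfg : Exact f g) (hf : Injective f) (hg : Surjective g)
    (h' : IsCFlat R C W') : Surjective (compRight R g : (C →ₗ[R] W) →ₗ[R] _) := by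
  obtain ⟨P, _⟩ := hC.exists_projectiveResolution
  obtain ⟨F, _, ⟨e⟩⟩ := h'
  have := hC.ext_vanish 1 one_pos
  have := (IsProjective.iff_projective _).mpr (P.projective 0)
  exact surjective_compRight_of_exact_lcomp P.surjective_π_f_zero P.exact_d_one_zero_π_f_zero
    (by rw [← ModuleCat.hom_comp, P.complex.d_comp_d, ModuleCat.hom_zero])
    (exact_lcomp_tensor_of_exact_lcomp (P.exact_lcomp_of_subsingleton_ext C))
    (f := f ∘ₗ e.toLinearEquiv.symm.toLinearMap) (LinearEquiv.precomp_exact_iff_exact.mpr hfg)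
    (hf.comp e.toLinearEquiv.symm.injective) hg

end IsSemidualizing

namespace IsCFlat

variable {R : Type} [CommRing R] {C V : ModuleCat.{0} R} [Module.FinitePresentation R C]

theorem flat_linearMap (hC : Bijective (toSpanSingleton R (C →ₗ[R] C) LinearMap.id))
    (hV : IsCFlat R C V) : Module.Flat R (C →ₗ[R] V) := by
  obtain ⟨F, _, ⟨e⟩⟩ := hV
  exact .of_linearEquiv (LinearEquiv.congrRight e.toLinearEquiv ≪≫ₗ
    (LinearEquiv.ofBijective _ (bijective_mk_flip_of_bijective_homothety hC)).symm)

theorem bijective_lift_applyₗ (hC : Bijective (toSpanSingleton R (C →ₗ[R] C) LinearMap.id))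
    (hV : IsCFlat R C V) :
    Bijective (TensorProduct.lift (applyₗ : C →ₗ[R] (C →ₗ[R] V) →ₗ[R] V)) := by
  obtain ⟨F, _, ⟨e⟩⟩ := hV
  let e' := e.toLinearEquiv
  have : TensorProduct.lift applyₗ = e'.symm.toLinearMap ∘ₗ TensorProduct.lift applyₗ ∘ₗ
      (LinearEquiv.lTensor C (LinearEquiv.congrRight e')).toLinearMap :=
    TensorProduct.ext' fun c φ => (e'.symm_apply_apply (φ c)).symm
  rw [this, coe_comp, coe_comp]
  exact e'.symm.bijective.comp
    ((bijective_lift_applyₗ_tensor_of_bijective_homothety hC).comp (LinearEquiv.bijective _))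

end IsCFlat

/-- If `0 → W' → W → W'' → 0` is a short exact sequence of `R`-modules with
`W'` and `W''` both `C`-flat, then `W` is `C`-flat. -/
theorem cFlat_of_shortExact (C : ModuleCat.{0} R) (hC : IsSemidualizing R C)
    (W' W W'' : ModuleCat.{0} R) (f : W' ⟶ W) (g : W ⟶ W'') (w : f ≫ g = 0)
    (hse : (ShortComplex.mk f g w).ShortExact)
    (h' : IsCFlat R C W') (h'' : IsCFlat R C W'') : IsCFlat R C W := by
  have := hC.finitePresentation
  have hfg : Exact f.hom g.hom :=
    (ShortComplex.ShortExact.moduleCat_exact_iff_function_exact _).mp hse.exact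
  have hf : Injective f.hom := hse.moduleCat_injective_f
  have hg : Surjective g.hom := hse.moduleCat_surjective_g
  have hgC := hC.surjective_compRight hfg hf hg h'
  have := h'.flat_linearMap hC.homothety
  have := h''.flat_linearMap hC.homothety
  have hflat : Module.Flat R (C →ₗ[R] W) :=
    .of_exact (f := compRight R f.hom) (exact_compRight_of_exact_of_injective C hfg hf)
      hf.injective_linearMapComp_left hgC
  have hev := bijective_lift_applyₗ_of_exact hfg hf hg hgC (h'.bijective_lift_applyₗ hC.homothety)
    (h''.bijective_lift_applyₗ hC.homothety)
  exact ⟨.of R (C →ₗ[R] W), hflat, ⟨(LinearEquiv.ofBijective _ hev).toModuleIso.symm⟩⟩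

end
end

section
/- If X is a C-projective complex (an exact complex all of whose cycles are C-projective modules), then the total Hom-complex 𝓗om(X, H) is exact for every C-flat complex H. -/
/-!
The cycles of `X` sit in short exact sequences `0 → Zᵢ → Xᵢ → Zᵢ₊₁ → 0` with `Zᵢ ≅ C ⊗ Pᵢ`,
`Pᵢ` projective. For a semidualizing `C` one has `Ext¹(C ⊗ P, C ⊗ F) = 0` whenever `P` is
projective and `F` flat, so these sequences split. Hence `X` is contractible, i.e. zero in the
homotopy category, and the cohomology of `𝓗om(X, H)`, which consists of morphisms `X ⟶ H⟦n⟧`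
there, vanishes.
-/

open CategoryTheory CategoryTheory.Limits TensorProduct

noncomputable section

variable (R : Type) [CommRing R]

section LinearAlgebra

variable {R : Type*} [CommRing R]

lemma rTensorHomToHomRTensor_comp_rTensor_lcomp {M M' N F : Type*} [AddCommGroup M] [Module R M]
    [AddCommGroup M'] [Module R M'] [AddCommGroup N] [Module R N] [AddCommGroup F] [Module R F]
    (u : M' →ₗ[R] M) :
    rTensorHomToHomRTensor (.id R) M' N F ∘ₗ (LinearMap.lcomp R N u).rTensor F =
      LinearMap.lcomp R (N ⊗[R] F) u ∘ₗ rTensorHomToHomRTensor (.id R) M N F := by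
  ext
  simp [rTensorHomToHomRTensor_apply]

lemma Function.Exact.lcomp_tensor {P₀ P₁ P₂ N F : Type*}
    [AddCommGroup P₀] [Module R P₀] [Module.Finite R P₀] [Module.Projective R P₀]
    [AddCommGroup P₁] [Module R P₁] [Module.Finite R P₁] [Module.Projective R P₁]
    [AddCommGroup P₂] [Module R P₂] [Module.Finite R P₂] [Module.Projective R P₂]
    [AddCommGroup N] [Module R N] [AddCommGroup F] [Module R F] [Module.Flat R F]
    {d₁ : P₁ →ₗ[R] P₀} {d₂ : P₂ →ₗ[R] P₁}
    (h : Function.Exact (LinearMap.lcomp R N d₁) (LinearMap.lcomp R N d₂)) :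
    Function.Exact (LinearMap.lcomp R (N ⊗[R] F) d₁) (LinearMap.lcomp R (N ⊗[R] F) d₂) :=
  (Function.Exact.iff_of_ladder_linearEquiv
    (e₁ := rTensorHomEquivHomRTensor R P₀ N F) (e₂ := rTensorHomEquivHomRTensor R P₁ N F)
    (e₃ := rTensorHomEquivHomRTensor R P₂ N F)
    (by simp [rTensorHomToHomRTensor_comp_rTensor_lcomp])
    (by simp [rTensorHomToHomRTensor_comp_rTensor_lcomp])).mpr
    (Module.Flat.rTensor_exact F h)

lemma surjective_compRight_tensor_of_projective {N P E M : Type*}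
    [AddCommGroup N] [Module R N] [AddCommGroup P] [Module R P] [Module.Projective R P]
    [AddCommGroup E] [Module R E] [AddCommGroup M] [Module R M] {q : E →ₗ[R] M}
    (hq : Function.Surjective (LinearMap.compRight R q : (N →ₗ[R] E) →ₗ[R] N →ₗ[R] M)) :
    Function.Surjective (LinearMap.compRight R q : (N ⊗[R] P →ₗ[R] E) →ₗ[R] N ⊗[R] P →ₗ[R] M) := by
  intro f
  obtain ⟨G, hG⟩ := Module.projective_lifting_property _ (TensorProduct.curry f).flip hq
  refine ⟨TensorProduct.lift G.flip, TensorProduct.ext' fun n p => ?_⟩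
  simpa using congr($hG p n)

lemma ModuleCat.exact_precomp_iff_exact_lcomp {P₀ P₁ P₂ N : ModuleCat R}
    (d₁ : P₁ ⟶ P₀) (d₂ : P₂ ⟶ P₁) :
    Function.Exact (fun ψ : P₀ ⟶ N => d₁ ≫ ψ) (fun φ : P₁ ⟶ N => d₂ ≫ φ) ↔
      Function.Exact (LinearMap.lcomp R N d₁.hom) (LinearMap.lcomp R N d₂.hom) := by
  refine ⟨fun h φ => ?_, fun h φ => ?_⟩
  · simpa [ModuleCat.hom_ext_iff, LinearMap.ext_iff, ModuleCat.homEquiv.exists_congr_left,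
      ModuleCat.homEquiv] using h (ModuleCat.ofHom φ)
  · simpa [ModuleCat.hom_ext_iff, LinearMap.ext_iff, ModuleCat.homEquiv.exists_congr_left,
      ModuleCat.homEquiv] using h φ.hom

end LinearAlgebra

section Abelian

variable {𝒜 : Type*} [Category 𝒜] [Abelian 𝒜]

lemma CategoryTheory.ProjectiveResolution.exact_precomp_of_subsingleton_ext {R : Type*} [Ring R]
    [Linear R 𝒜] [EnoughProjectives 𝒜] {X : 𝒜} (P : ProjectiveResolution X) (Y : 𝒜)
    [Subsingleton (((Ext R 𝒜 1).obj (Opposite.op X)).obj Y)] :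
    Function.Exact (fun ψ : P.complex.X 0 ⟶ Y => P.complex.d 1 0 ≫ ψ)
      (fun φ : P.complex.X 1 ⟶ Y => P.complex.d 2 1 ≫ φ) := by
  have hY : (P.complex.linearYonedaObj R Y).ExactAt 1 :=
    (HomologicalComplex.exactAt_iff_isZero_homology _ _).mpr
      (IsZero.of_iso (ModuleCat.isZero_of_subsingleton _) (P.isoExt 1 Y).symm)
  rw [HomologicalComplex.exactAt_iff' _ 0 1 2 (by simp) (by simp),
    ShortComplex.moduleCat_exact_iff_range_eq_ker] at hY
  exact fun φ => (SetLike.ext_iff.mp hY φ).symm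

/-- `hK` says that `Ext¹(T.X₃, S.X₁) = 0`, computed on the presentation
`P₂ → T.X₁ → T.X₂ → T.X₃ → 0`. -/
lemma CategoryTheory.ShortComplex.ShortExact.exists_comp_g_eq {S T : ShortComplex 𝒜}
    (hS : S.ShortExact) (hT : T.Exact) [Epi T.g] [Projective T.X₂] {P₂ : 𝒜} (d : P₂ ⟶ T.X₁)
    (hK : Function.Exact (fun ψ : T.X₂ ⟶ S.X₁ => T.f ≫ ψ) (fun φ : T.X₁ ⟶ S.X₁ => d ≫ φ))
    (hd : d ≫ T.f = 0) (f : T.X₃ ⟶ S.X₃) : ∃ g : T.X₃ ⟶ S.X₂, g ≫ S.g = f := by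
  have := hS.mono_f
  have := hS.epi_g
  let g₀ := Projective.factorThru (T.g ≫ f) S.g
  have hg₀ : g₀ ≫ S.g = T.g ≫ f := Projective.factorThru_comp _ _
  let φ := hS.exact.lift (T.f ≫ g₀) (by simp [hg₀])
  have hφ : d ≫ φ = 0 := by
    simp [← cancel_mono S.f, φ, reassoc_of% hd]
  obtain ⟨ψ, hψ⟩ := (hK φ).mp hφ
  refine ⟨hT.desc (g₀ - ψ ≫ S.f) ?_, ?_⟩
  · simp [reassoc_of% hψ, φ]
  · simp [← cancel_epi T.g, hg₀]

end Abelian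

namespace HomologicalComplex

variable {ι V : Type*} [Category V] [Abelian V] {c : ComplexShape ι} (K : HomologicalComplex V c)

lemma iCycles_toCycles (i j : ι) : K.iCycles i ≫ K.toCycles i j = 0 := by
  rw [← cancel_mono (K.iCycles j), Category.assoc, K.toCycles_i, K.iCycles_d, Limits.zero_comp]

lemma shortExact_iCycles_toCycles {i j : ι} (hij : c.Rel i j) (hj : K.ExactAt j) :
    (ShortComplex.mk _ _ (K.iCycles_toCycles i j)).ShortExact where
  exact := by
    refine (ShortComplex.exact_iff_of_epi_of_isIso_of_mono
      (S₁ := ShortComplex.mk _ _ (K.iCycles_toCycles i j))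
      (S₂ := ShortComplex.mk _ _ (K.iCycles_d i j))
      { τ₁ := 𝟙 _, τ₂ := 𝟙 _, τ₃ := K.iCycles j }).mpr ?_
    exact ShortComplex.exact_of_f_is_kernel _ (K.cyclesIsKernel i j (c.next_eq' hij))
  epi_g := by
    have := ((K.exactAt_iff' i j (c.next j) (c.prev_eq' hij) rfl).mp hj).epi_toCycles
    exact (epi_comp_iff_of_isIso _ (K.cyclesIsoSc' i j _ (c.prev_eq' hij) rfl).hom).mp
      (by rwa [K.toCycles_cyclesIsoSc'_hom])

end HomologicalComplex

namespace CochainComplex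

lemma isZero_quotient_obj_of_isSplitEpi_toCycles {V : Type*} [Category V] [Abelian V]
    (K : CochainComplex V ℤ) (h : ∀ i j, i + 1 = j → IsSplitEpi (K.toCycles i j)) :
    IsZero ((HomotopyCategory.quotient V _).obj K) := by
  let s (i j : ℤ) (hij : i + 1 = j) : K.cycles j ⟶ K.X i :=
    have := h i j hij; section_ (K.toCycles i j)
  have hs (i j : ℤ) (hij : i + 1 = j) : s i j hij ≫ K.toCycles i j = 𝟙 _ :=
    have := h i j hij; IsSplitEpi.id _
  have hsd (i j : ℤ) (hij : i + 1 = j) : s i j hij ≫ K.d i j = K.iCycles j := by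
    rw [← K.toCycles_i, reassoc_of% (hs i j hij)]
  have hp (i : ℤ) : (𝟙 _ - K.toCycles i (i + 1) ≫ s i (i + 1) rfl) ≫ K.d i (i + 1) = 0 := by
    simp [Preadditive.sub_comp, hsd]
  -- `p i` is the projection of `K.X i` onto the cycles along the image of the section.
  let p (i : ℤ) : K.X i ⟶ K.cycles i := K.liftCycles _ (i + 1) (by simp) (hp i)
  have hpi (i : ℤ) : p i ≫ K.iCycles i = 𝟙 _ - K.toCycles i (i + 1) ≫ s i (i + 1) rfl :=
    K.liftCycles_i _ _ _ _
  have hdp (i : ℤ) : K.d i (i + 1) ≫ p (i + 1) = K.toCycles i (i + 1) := by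
    rw [← cancel_mono (K.iCycles _), Category.assoc, hpi, Preadditive.comp_sub,
      K.d_toCycles_assoc, Limits.zero_comp, sub_zero, Category.comp_id, K.toCycles_i]
  refine (HomotopyCategory.isZero_quotient_obj_iff K).mpr
    ⟨(Homotopy.ofEq ?_).trans (Homotopy.nullHomotopy' fun i j hji => p i ≫ s j i hji)⟩
  ext i
  rw [Homotopy.nullHomotopicMap'_f (c := ComplexShape.up ℤ) (k₂ := i - 1) (by simp) rfl,
    reassoc_of% hdp, Category.assoc, hsd (i - 1) i (by simp), hpi]
  simp

lemma HomComplex.exactAt_of_isZero_quotient_obj {C : Type*} [Category C] [Preadditive C]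
    {K : CochainComplex C ℤ} (hK : IsZero ((HomotopyCategory.quotient C _).obj K))
    (L : CochainComplex C ℤ) (n : ℤ) : (HomComplex K L).ExactAt n := by
  rw [HomologicalComplex.exactAt_iff_isZero_homology]
  have : Subsingleton ((HomComplex K L).homology n) :=
    ((HomComplex.homologyAddEquiv K L n).trans
      HomComplex.CohomologyClass.homAddEquiv).toEquiv.subsingleton_congr.mpr
        ⟨fun _ _ => hK.eq_of_src _ _⟩
  exact AddCommGrpCat.isZero_of_subsingleton _

end CochainComplex

section

variable {R}

lemma IsCProj.isCFlat {C M : ModuleCat.{0} R} (h : IsCProj R C M) : IsCFlat R C M := by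
  obtain ⟨P, hP, e⟩ := h
  have : Module.Projective R P := (IsProjective.iff_projective P).mpr hP
  exact ⟨P, inferInstance, e⟩

namespace IsSemidualizing

variable {C : ModuleCat.{0} R}

lemma exists_projectiveResolution_finite (hC : IsSemidualizing R C) :
    ∃ P : ProjectiveResolution C, ∀ n, Module.Finite R (P.complex.X n) := by
  obtain ⟨P, π, hproj, hfin, hπ⟩ := hC.resolution
  exact ⟨{ complex := P, projective := hproj, π := π, quasiIso := hπ }, hfin⟩

/-- `Ext¹(C, C ⊗ F) = 0` for `F` flat: on a resolution `P` of `C` by finite projectives,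
`Hom(P, C ⊗ F) = Hom(P, C) ⊗ F`, and `Hom(P, C)` is exact in degree `1` as `Ext¹(C, C) = 0`. -/
lemma exists_comp_g_eq_of_isCFlat (hC : IsSemidualizing R C) {S : ShortComplex (ModuleCat.{0} R)}
    (hS : S.ShortExact) (hK : IsCFlat R C S.X₁) (f : C ⟶ S.X₃) : ∃ g : C ⟶ S.X₂, g ≫ S.g = f := by
  obtain ⟨P, hfin⟩ := hC.exists_projectiveResolution_finite
  obtain ⟨F, hF, ⟨e⟩⟩ := hK
  have := hC.ext_vanish 1 one_pos
  have (n : ℕ) : Module.Projective R (P.complex.X n) :=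
    (IsProjective.iff_projective _).mpr (P.projective n)
  have hC₁ := (ModuleCat.exact_precomp_iff_exact_lcomp _ _).mp
    (P.exact_precomp_of_subsingleton_ext (R := R) C)
  have hCF := (ModuleCat.exact_precomp_iff_exact_lcomp (N := .of R (C ⊗[R] F)) _ _).mpr
    (hC₁.lcomp_tensor (F := F))
  refine hS.exists_comp_g_eq P.exact₀ (P.complex.d 2 1) (fun φ => ⟨fun hφ => ?_, ?_⟩)
    (P.complex.d_comp_d 2 1 0) f
  · obtain ⟨ψ, hψ⟩ := (hCF (φ ≫ e.hom)).mp (by simp [reassoc_of% hφ])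
    exact ⟨ψ ≫ e.inv, by simp [reassoc_of% hψ]⟩
  · rintro ⟨ψ, rfl⟩
    simp

lemma exists_comp_g_eq_of_isCProj (hC : IsSemidualizing R C) {S : ShortComplex (ModuleCat.{0} R)}
    (hS : S.ShortExact) (hK : IsCFlat R C S.X₁) {M : ModuleCat.{0} R} (hM : IsCProj R C M)
    (f : M ⟶ S.X₃) : ∃ g : M ⟶ S.X₂, g ≫ S.g = f := by
  obtain ⟨P, hP, ⟨e⟩⟩ := hM
  have : Module.Projective R P := (IsProjective.iff_projective P).mpr hP
  have hq : Function.Surjective (LinearMap.compRight R S.g.hom : (C →ₗ[R] S.X₂) →ₗ[R] _) :=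
    fun f => by
      obtain ⟨g, hg⟩ := hC.exists_comp_g_eq_of_isCFlat hS hK (ModuleCat.ofHom f)
      exact ⟨g.hom, congr(($hg).hom)⟩
  obtain ⟨g, hg⟩ := surjective_compRight_tensor_of_projective hq (e.inv ≫ f).hom
  exact ⟨e.hom ≫ ModuleCat.ofHom g, by ext x; simpa using congr($hg (e.hom x))⟩

end IsSemidualizing

lemma IsCProjCx.isSplitEpi_toCycles {C : ModuleCat.{0} R} (hC : IsSemidualizing R C) {X : Cx R}
    (hX : IsCProjCx R C X) (i j : ℤ) (hij : i + 1 = j) : IsSplitEpi (X.toCycles i j) := by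
  obtain ⟨hexact, hcycles⟩ := hX
  obtain ⟨σ, hσ⟩ := hC.exists_comp_g_eq_of_isCProj (X.shortExact_iCycles_toCycles hij (hexact j))
    (hcycles i).isCFlat (hcycles j) (𝟙 _)
  exact ⟨⟨σ, hσ⟩⟩

end

/-- If `X` is a `C`-projective complex, then `𝓗om(X,H)` is exact for every
`C`-flat complex `H`. -/
theorem homComplexExact_of_cProjCx (C : ModuleCat.{0} R) (hC : IsSemidualizing R C)
    (X : Cx R) (hX : IsCProjCx R C X) :
    ∀ H : Cx R, IsCFlatCx R C H → HomComplexExact R X H := by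
  intro H _ n
  exact CochainComplex.HomComplex.exactAt_of_isZero_quotient_obj
    (X.isZero_quotient_obj_of_isSplitEpi_toCycles (hX.isSplitEpi_toCycles hC)) H n
end
end
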